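/- (Inner simplex approximation.) Fix a ∈ Fin 2 and c ∈ Fin K and assume μ{Y = y, A = a, C = c} > 0 for every y ∈ Fin N. Let s_y = μ{Y = y, A = a, C = c} / μ{A = a, C = c}, for each θ ∈ ℝ^N_{≥0} let h_θ be a chosen derived predictor for (a,c), and let D_{ac} = ⋂_{θ ∈ ℝ^N_{≥0}} { x ∈ [0,1]^N : Σ_y θ_y s_y x_y ≤ Σ_y θ_y s_y TP_{ac}^y(h_θ) }. Let h* be the Bayes argmax predictor (μ{Y = h*(x,a,c), X = x, A = a, C = c} = max_y μ{Y = y, X = x, A = a, C = c} for all (x,a,c)). Then the convex hull of { e_1, …, e_N, (TP_{ac}^1(h*), …, TP_{ac}^N(h*)) }, where e_y ∈ ℝ^N are the standard basis vectors, is contained in D_{ac}. -/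

import Mathlib

open scoped Classical
open Finset

/-- Probability of an event under a finite mass function `μ`. -/
noncomputable def pr {Ω : Type*} [Fintype Ω] (μ : Ω → ℝ) (P : Ω → Prop) : ℝ :=
  ∑ ω : Ω, if P ω then μ ω else 0

/-- `μ` is a probability mass function on the finite type `Ω`. -/
structure IsProbMass {Ω : Type*} [Fintype Ω] (μ : Ω → ℝ) : Prop where
  nonneg : ∀ ω, 0 ≤ μ ω
  total : ∑ ω : Ω, μ ω = 1

/-- True positive rate of the predictor `h` for class `y`, group `a` and client `c`:
`TP_{ac}^y(h) = μ{h(X,A,C) = y ∧ Y = y ∧ A = a ∧ C = c} / μ{Y = y ∧ A = a ∧ C = c}`. -/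
noncomputable def TP {Ω 𝒳 : Type*} [Fintype Ω] {K N : ℕ} (μ : Ω → ℝ)
    (X : Ω → 𝒳) (A : Ω → Fin 2) (C : Ω → Fin K) (Y : Ω → Fin N)
    (h : 𝒳 × Fin 2 × Fin K → Fin N) (y : Fin N) (a : Fin 2) (c : Fin K) : ℝ :=
  pr μ (fun ω => h (X ω, A ω, C ω) = y ∧ Y ω = y ∧ A ω = a ∧ C ω = c) /
    pr μ (fun ω => Y ω = y ∧ A ω = a ∧ C ω = c)

/-- Bayesian optimal score for group `a`, client `c`:
`r_y(x) = μ{Y = y ∧ X = x ∧ A = a ∧ C = c} / μ{X = x ∧ A = a ∧ C = c}`. -/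
noncomputable def score {Ω 𝒳 : Type*} [Fintype Ω] {K N : ℕ} (μ : Ω → ℝ)
    (X : Ω → 𝒳) (A : Ω → Fin 2) (C : Ω → Fin K) (Y : Ω → Fin N)
    (a : Fin 2) (c : Fin K) (y : Fin N) (x : 𝒳) : ℝ :=
  pr μ (fun ω => Y ω = y ∧ X ω = x ∧ A ω = a ∧ C ω = c) /
    pr μ (fun ω => X ω = x ∧ A ω = a ∧ C ω = c)

/-- `h` is a derived predictor for `(a, c)` and weight vector `θ`:
for every `x` in the support, `θ_{h(x,a,c)} ⬝ r_{h(x,a,c)}(x) = max_y θ_y ⬝ r_y(x)`. -/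
def IsDerivedPredictor {Ω 𝒳 : Type*} [Fintype Ω] {K N : ℕ} (μ : Ω → ℝ)
    (X : Ω → 𝒳) (A : Ω → Fin 2) (C : Ω → Fin K) (Y : Ω → Fin N)
    (a : Fin 2) (c : Fin K) (θ : Fin N → ℝ) (h : 𝒳 × Fin 2 × Fin K → Fin N) : Prop :=
  ∀ x : 𝒳, 0 < pr μ (fun ω => X ω = x ∧ A ω = a ∧ C ω = c) →
    IsGreatest (Set.range fun y => θ y * score μ X A C Y a c y x)
      (θ (h (x, a, c)) * score μ X A C Y a c (h (x, a, c)) x)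

/-- The region under the ROC hypersurface `D_{ac}`, where `hp θ` is the chosen derived
predictor for weight vector `θ`. -/
def RUS {Ω 𝒳 : Type*} [Fintype Ω] {K N : ℕ} (μ : Ω → ℝ)
    (X : Ω → 𝒳) (A : Ω → Fin 2) (C : Ω → Fin K) (Y : Ω → Fin N)
    (a : Fin 2) (c : Fin K)
    (hp : (Fin N → ℝ) → 𝒳 × Fin 2 × Fin K → Fin N) : Set (Fin N → ℝ) :=
  ⋂ θ ∈ {θ : Fin N → ℝ | ∀ y, 0 ≤ θ y},
    {v : Fin N → ℝ | (∀ y, v y ∈ Set.Icc (0 : ℝ) 1) ∧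
      ∑ y : Fin N, θ y * (pr μ (fun ω => Y ω = y ∧ A ω = a ∧ C ω = c) /
          pr μ (fun ω => A ω = a ∧ C ω = c)) * v y ≤
      ∑ y : Fin N, θ y * (pr μ (fun ω => Y ω = y ∧ A ω = a ∧ C ω = c) /
          pr μ (fun ω => A ω = a ∧ C ω = c)) * TP μ X A C Y (hp θ) y a c}

/-! `D_{ac}` is an intersection of half-spaces with the cube `[0,1]^N`, hence convex, so it
suffices to show that it contains `e_y` and the true-positive vector of `h*`.
Writing `s_y TP^y(h) = μ{h = y, Y = y, A = a, C = c} / μ{A = a, C = c}`, the weighted sum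
`∑_y θ_y s_y TP^y(h)` is the `θ`-weighted mass of correctly classified points, and the derived
predictor `h_θ` maximises it over all predictors because it does so separately on every slice
`{X = x}`. Hence the true-positive vector of every predictor, `h*` included, lies in `D_{ac}`;
and `e_y` has the same weighted sums as the true-positive vector of the constant predictor `y`. -/

section Probability

variable {Ω : Type*} [Fintype Ω] {μ : Ω → ℝ}

lemma pr_nonneg (hμ : ∀ ω, 0 ≤ μ ω) (P : Ω → Prop) : 0 ≤ pr μ P :=
  Finset.sum_nonneg fun ω _ => by split_ifs <;> simp [hμ ω]

lemma pr_mono (hμ : ∀ ω, 0 ≤ μ ω) {P Q : Ω → Prop} (h : ∀ ω, P ω → Q ω) :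
    pr μ P ≤ pr μ Q :=
  Finset.sum_le_sum fun ω _ => by
    by_cases hP : P ω
    · simp [hP, h ω hP]
    · split_ifs <;> simp [hμ ω]

lemma pr_eq_zero_of_imp (hμ : ∀ ω, 0 ≤ μ ω) {P Q : Ω → Prop} (h : ∀ ω, P ω → Q ω)
    (hQ : pr μ Q = 0) : pr μ P = 0 :=
  le_antisymm (hQ ▸ pr_mono hμ h) (pr_nonneg hμ P)

lemma pr_const_and (p : Prop) [Decidable p] (Q : Ω → Prop) :
    pr μ (fun ω => p ∧ Q ω) = if p then pr μ Q else 0 := by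
  by_cases hp : p <;> simp [pr, hp]

lemma pr_eq_sum_pr_and_eq {𝒳 : Type*} [Fintype 𝒳] (X : Ω → 𝒳) (P : Ω → Prop) :
    pr μ P = ∑ x, pr μ (fun ω => P ω ∧ X ω = x) := by
  simp only [pr]
  rw [Finset.sum_comm (γ := 𝒳)]
  refine Finset.sum_congr rfl fun ω _ => ?_
  by_cases hP : P ω <;> simp [hP]

end Probability

section DerivedPredictor

variable {Ω 𝒳 : Type*} [Fintype Ω] {K N : ℕ} {μ : Ω → ℝ}
  {X : Ω → 𝒳} {A : Ω → Fin 2} {C : Ω → Fin K} {Y : Ω → Fin N} {a : Fin 2} {c : Fin K}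

variable (μ X A C Y a c) in
noncomputable def weightedHits (θ : Fin N → ℝ) (h : 𝒳 × Fin 2 × Fin K → Fin N) : ℝ :=
  ∑ y, θ y * pr μ (fun ω => h (X ω, A ω, C ω) = y ∧ Y ω = y ∧ A ω = a ∧ C ω = c)

lemma weightedHits_eq_sum [Fintype 𝒳] (θ : Fin N → ℝ) (h : 𝒳 × Fin 2 × Fin K → Fin N) :
    weightedHits μ X A C Y a c θ h =
      ∑ x, θ (h (x, a, c)) * pr μ (fun ω => Y ω = h (x, a, c) ∧ X ω = x ∧ A ω = a ∧ C ω = c) := by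
  have fiber : ∀ x y, pr μ (fun ω => (h (X ω, A ω, C ω) = y ∧ Y ω = y ∧ A ω = a ∧ C ω = c) ∧
      X ω = x) = if h (x, a, c) = y then pr μ (fun ω => Y ω = y ∧ X ω = x ∧ A ω = a ∧ C ω = c)
        else 0 := by
    intro x y
    rw [← pr_const_and]
    congr 1
    ext ω
    constructor
    · rintro ⟨⟨rfl, hY, rfl, rfl⟩, rfl⟩
      exact ⟨rfl, hY, rfl, rfl, rfl⟩
    · rintro ⟨rfl, hY, rfl, rfl, rfl⟩
      exact ⟨⟨rfl, hY, rfl, rfl⟩, rfl⟩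
  simp only [weightedHits, pr_eq_sum_pr_and_eq X (fun ω => h _ = _ ∧ _), fiber, Finset.mul_sum]
  rw [Finset.sum_comm]
  refine Finset.sum_congr rfl fun x _ => ?_
  simp [mul_ite, Finset.sum_ite_eq]

lemma IsDerivedPredictor.mul_pr_le (hμ : ∀ ω, 0 ≤ μ ω) {θ : Fin N → ℝ}
    {g : 𝒳 × Fin 2 × Fin K → Fin N} (hg : IsDerivedPredictor μ X A C Y a c θ g) (x : 𝒳)
    (y : Fin N) :
    θ y * pr μ (fun ω => Y ω = y ∧ X ω = x ∧ A ω = a ∧ C ω = c) ≤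
      θ (g (x, a, c)) * pr μ (fun ω => Y ω = g (x, a, c) ∧ X ω = x ∧ A ω = a ∧ C ω = c) := by
  set px := pr μ (fun ω => X ω = x ∧ A ω = a ∧ C ω = c)
  rcases (pr_nonneg hμ _ : 0 ≤ px).lt_or_eq with hx | hx
  · have hscore : θ y * score μ X A C Y a c y x ≤
        θ (g (x, a, c)) * score μ X A C Y a c (g (x, a, c)) x := (hg x hx).2 ⟨y, rfl⟩
    simp only [score, ← mul_div_assoc] at hscore
    exact (div_le_div_iff_of_pos_right hx).1 hscore
  · have hzero : ∀ y', pr μ (fun ω => Y ω = y' ∧ X ω = x ∧ A ω = a ∧ C ω = c) = 0 :=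
      fun y' => pr_eq_zero_of_imp hμ (fun ω hω => hω.2) hx.symm
    simp [hzero]

lemma IsDerivedPredictor.weightedHits_le [Fintype 𝒳] (hμ : ∀ ω, 0 ≤ μ ω) {θ : Fin N → ℝ}
    {g : 𝒳 × Fin 2 × Fin K → Fin N} (hg : IsDerivedPredictor μ X A C Y a c θ g)
    (h : 𝒳 × Fin 2 × Fin K → Fin N) :
    weightedHits μ X A C Y a c θ h ≤ weightedHits μ X A C Y a c θ g := by
  simp only [weightedHits_eq_sum]
  exact Finset.sum_le_sum fun x _ => hg.mul_pr_le hμ x _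

lemma TP_mem_Icc (hμ : ∀ ω, 0 ≤ μ ω) (h : 𝒳 × Fin 2 × Fin K → Fin N) (y : Fin N) :
    TP μ X A C Y h y a c ∈ Set.Icc 0 1 :=
  ⟨div_nonneg (pr_nonneg hμ _) (pr_nonneg hμ _),
    div_le_one_of_le₀ (pr_mono hμ fun _ hω => hω.2) (pr_nonneg hμ _)⟩

lemma div_pr_mul_TP (hμ : ∀ ω, 0 ≤ μ ω) (h : 𝒳 × Fin 2 × Fin K → Fin N) (y : Fin N) :
    pr μ (fun ω => Y ω = y ∧ A ω = a ∧ C ω = c) / pr μ (fun ω => A ω = a ∧ C ω = c) *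
        TP μ X A C Y h y a c =
      pr μ (fun ω => h (X ω, A ω, C ω) = y ∧ Y ω = y ∧ A ω = a ∧ C ω = c) /
        pr μ (fun ω => A ω = a ∧ C ω = c) := by
  by_cases hy : pr μ (fun ω => Y ω = y ∧ A ω = a ∧ C ω = c) = 0
  · have hhit : pr μ (fun ω => h (X ω, A ω, C ω) = y ∧ Y ω = y ∧ A ω = a ∧ C ω = c) = 0 :=
      pr_eq_zero_of_imp hμ (fun _ hω => hω.2) hy
    simp [hy, hhit]
  · rw [TP]
    field_simp

lemma sum_mul_div_pr_mul_TP (hμ : ∀ ω, 0 ≤ μ ω) (θ : Fin N → ℝ)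
    (h : 𝒳 × Fin 2 × Fin K → Fin N) :
    ∑ y, θ y * (pr μ (fun ω => Y ω = y ∧ A ω = a ∧ C ω = c) /
        pr μ (fun ω => A ω = a ∧ C ω = c)) * TP μ X A C Y h y a c =
      weightedHits μ X A C Y a c θ h / pr μ (fun ω => A ω = a ∧ C ω = c) := by
  simp only [weightedHits, Finset.sum_div, mul_assoc, div_pr_mul_TP hμ, mul_div_assoc]

lemma div_pr_mul_TP_const (hμ : ∀ ω, 0 ≤ μ ω) (y y' : Fin N) :
    pr μ (fun ω => Y ω = y' ∧ A ω = a ∧ C ω = c) / pr μ (fun ω => A ω = a ∧ C ω = c) *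
        TP μ X A C Y (fun _ => y) y' a c =
      pr μ (fun ω => Y ω = y' ∧ A ω = a ∧ C ω = c) / pr μ (fun ω => A ω = a ∧ C ω = c) *
        (Pi.single y 1 : Fin N → ℝ) y' := by
  rw [div_pr_mul_TP hμ, pr_const_and]
  rcases eq_or_ne y' y with rfl | hne
  · simp
  · simp [hne, hne.symm]

lemma IsDerivedPredictor.sum_mul_div_pr_mul_TP_le [Fintype 𝒳] (hμ : ∀ ω, 0 ≤ μ ω)
    {θ : Fin N → ℝ} {g : 𝒳 × Fin 2 × Fin K → Fin N}
    (hg : IsDerivedPredictor μ X A C Y a c θ g) (h : 𝒳 × Fin 2 × Fin K → Fin N) :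
    ∑ y, θ y * (pr μ (fun ω => Y ω = y ∧ A ω = a ∧ C ω = c) /
        pr μ (fun ω => A ω = a ∧ C ω = c)) * TP μ X A C Y h y a c ≤
      ∑ y, θ y * (pr μ (fun ω => Y ω = y ∧ A ω = a ∧ C ω = c) /
        pr μ (fun ω => A ω = a ∧ C ω = c)) * TP μ X A C Y g y a c := by
  simp only [sum_mul_div_pr_mul_TP hμ]
  exact div_le_div_of_nonneg_right (hg.weightedHits_le hμ h) (pr_nonneg hμ _)

lemma convex_setOf_sum_mul_le (w : Fin N → ℝ) (b : ℝ) :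
    Convex ℝ {v : Fin N → ℝ | ∑ y, w y * v y ≤ b} := by
  refine convex_halfSpace_le ⟨fun u v => ?_, fun r v => ?_⟩ b
  · simp only [Pi.add_apply, mul_add, Finset.sum_add_distrib]
  · simp only [Pi.smul_apply, smul_eq_mul, Finset.mul_sum]
    exact Finset.sum_congr rfl fun _ _ => by ring

lemma convex_RUS (hp : (Fin N → ℝ) → 𝒳 × Fin 2 × Fin K → Fin N) :
    Convex ℝ (RUS μ X A C Y a c hp) := by
  refine convex_iInter fun θ => convex_iInter fun _ => ?_
  rw [Set.ofPred_and]
  refine Convex.inter ?_ (convex_setOf_sum_mul_le _ _)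
  have hcube : {v : Fin N → ℝ | ∀ y, v y ∈ Set.Icc (0 : ℝ) 1} =
      Set.univ.pi fun _ => Set.Icc 0 1 :=
    Set.ext fun _ => Set.mem_univ_pi.symm
  exact hcube ▸ convex_pi fun _ _ => convex_Icc 0 1

end DerivedPredictor

theorem simplex_subset_region_under_ROC_general
    {Ω 𝒳 : Type*} [Fintype Ω] [Fintype 𝒳] {K N : ℕ}
    (μ : Ω → ℝ) (hμ : IsProbMass μ)
    (X : Ω → 𝒳) (A : Ω → Fin 2) (C : Ω → Fin K) (Y : Ω → Fin N)
    (a : Fin 2) (c : Fin K)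
    (hp : (Fin N → ℝ) → 𝒳 × Fin 2 × Fin K → Fin N)
    (hderiv : ∀ θ : Fin N → ℝ, (∀ y, 0 ≤ θ y) →
      IsDerivedPredictor μ X A C Y a c θ (hp θ))
    (hstar : 𝒳 × Fin 2 × Fin K → Fin N) :
    convexHull ℝ
        ((Set.range fun y : Fin N => (Pi.single y 1 : Fin N → ℝ)) ∪
          {fun y => TP μ X A C Y hstar y a c}) ⊆
      RUS μ X A C Y a c hp := by
  refine convexHull_min ?_ (convex_RUS hp)
  rintro v (⟨y, rfl⟩ | rfl) <;> simp only [RUS, Set.mem_iInter] <;> intro θ hθ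
  · refine ⟨fun y' => ?_, le_of_eq_of_le ?_ ((hderiv θ hθ).sum_mul_div_pr_mul_TP_le hμ.nonneg
      fun _ => y)⟩
    · rcases eq_or_ne y' y with rfl | hne
      · simp
      · simp [hne]
    · simp only [mul_assoc, div_pr_mul_TP_const hμ.nonneg]
  · exact ⟨fun y => TP_mem_Icc hμ.nonneg hstar y,
      (hderiv θ hθ).sum_mul_div_pr_mul_TP_le hμ.nonneg hstar⟩

/-- inner simplex approximation: the convex hull of the standard basis
vectors `e_1, …, e_N` together with the true-positive vector of the Bayes argmax
predictor is contained in the region under the ROC hypersurface `D_{ac}`. -/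
theorem simplex_subset_region_under_ROC
    {Ω 𝒳 : Type*} [Fintype Ω] [Nonempty Ω] [Fintype 𝒳] {K N : ℕ}
    (hK : 0 < K) (hN : 0 < N)
    (μ : Ω → ℝ) (hμ : IsProbMass μ)
    (X : Ω → 𝒳) (A : Ω → Fin 2) (C : Ω → Fin K) (Y : Ω → Fin N)
    (a : Fin 2) (c : Fin K)
    (hpos : ∀ y : Fin N, 0 < pr μ (fun ω => Y ω = y ∧ A ω = a ∧ C ω = c))
    (hp : (Fin N → ℝ) → 𝒳 × Fin 2 × Fin K → Fin N)
    (hderiv : ∀ θ : Fin N → ℝ, (∀ y, 0 ≤ θ y) →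
      IsDerivedPredictor μ X A C Y a c θ (hp θ))
    (hstar : 𝒳 × Fin 2 × Fin K → Fin N)
    (hopt : ∀ (x : 𝒳) (a' : Fin 2) (c' : Fin K),
      IsGreatest
        (Set.range fun y : Fin N =>
          pr μ (fun ω => Y ω = y ∧ X ω = x ∧ A ω = a' ∧ C ω = c'))
        (pr μ (fun ω =>
          Y ω = hstar (x, a', c') ∧ X ω = x ∧ A ω = a' ∧ C ω = c'))) :
    convexHull ℝ
        ((Set.range fun y : Fin N => (Pi.single y 1 : Fin N → ℝ)) ∪
          {fun y => TP μ X A C Y hstar y a c}) ⊆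
      RUS μ X A C Y a c hp :=
  simplex_subset_region_under_ROC_general μ hμ X A C Y a c hp hderiv hstar
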